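/- Locality of action transformers (fault preservation): for any action α and resources σ, σ₁, σ₂ with σ ∈ (σ₁ ∥ σ₂), if ⟦α⟧σ = ⊤ (α is impermissible on the combined resource) then ⟦α⟧σ₁ = ⊤. -/
import Mathlib


inductive Own | pub | pri
deriving DecidableEq

abbrev Chan := ℕ
abbrev Resource := Chan → Option Own

def Resource.dom (σ : Resource) : Set Chan := {c | (σ c).isSome}

def upd (σ : Resource) (c : Chan) (o : Own) : Resource :=
  fun d => if d = c then some o else σ d

/-- σ ∈ (σ₁ ∥ σ₂): parallel separation. -/
def PSep (σ σ₁ σ₂ : Resource) : Prop :=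
  σ.dom = σ₁.dom ∪ σ₂.dom ∧
  (∀ c, σ₁ c = some Own.pri → σ c = some Own.pri ∧ c ∉ σ₂.dom) ∧
  (∀ c, σ₂ c = some Own.pri → σ c = some Own.pri ∧ c ∉ σ₁.dom)

/-- public lifting σ̂ -/
def pubLift (σ : Resource) : Resource := fun c => (σ c).map fun _ => Own.pub

inductive Act
  | send (c d : Chan)
  | recv (c d : Chan)
  | alloc (c : Chan)
  | tau
  | fault
deriving DecidableEq

inductive ARes | ok (σ : Resource) | top | bot

def act : Act → Resource → ARes
  | .send c d, σ =>
      if (σ c).isSome ∧ (σ d).isSome then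
        if σ c = some Own.pub then .ok (upd σ d Own.pub) else .bot
      else .top
  | .recv c d, σ =>
      if (σ c).isSome then
        if σ c = some Own.pub ∧ σ d ≠ some Own.pri then .ok (upd σ d Own.pub) else .bot
      else .top
  | .alloc c, σ => if (σ c).isSome then .bot else .ok (upd σ c Own.pri)
  | .tau, σ => .ok σ
  | .fault, _ => .top

def dual : Act → Option Act
  | .send c d => some (.recv c d)
  | .recv c d => some (.send c d)
  | _ => none

theorem locality_fault (α : Act) (σ σ₁ σ₂ : Resource)
    (hsep : PSep σ σ₁ σ₂) (h : act α σ = ARes.top) : act α σ₁ = ARes.top := by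
  have hdom : ∀ c, (σ₁ c).isSome → (σ c).isSome := by
    intro c hc
    have : c ∈ σ.dom := by
      rw [hsep.1]; exact Set.mem_union_left _ hc
    exact this
  cases α with
  | send c d =>
      simp only [act] at h ⊢
      split at h
      · split at h <;> simp_all
      · rename_i hn
        rw [if_neg]
        intro ⟨h1, h2⟩
        exact hn ⟨hdom c h1, hdom d h2⟩
  | recv c d =>
      simp only [act] at h ⊢
      split at h
      · split at h <;> simp_all
      · rename_i hn
        rw [if_neg]
        intro h1
        exact hn (hdom c h1)
  | alloc c =>
      simp only [act] at h
      split at h <;> simp_all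
  | tau => simp [act] at h
  | fault => rfl
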